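/- Let p ∈ (0,1), let b : Ω → ℝ be essentially bounded and measurable, let a > 0 be real, and let v : Ω → ℝ be measurable with v(x) > 0 for a.e. x ∈ Ω, such that x ↦ |v(x)|^(p+1) is integrable and x ↦ h(x)·g(v(x))^(1−γ) is integrable on Ω. Then there exists t₀ > 0 such that a·t₀² = ∫_Ω h(x)·g(t₀·v(x))^(−γ)·g'(t₀·v(x))·t₀·v(x) dx + ∫_Ω b(x)·g(t₀·v(x))^p·g'(t₀·v(x))·t₀·v(x) dx; that is, t₀·v lies on the Nehari-type constraint set 𝒩₂ associated to the dual singular problem. -/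

import Mathlib

/-!
Along the ray `t ↦ t v` the constraint reads `F t = 0` with
`F t = a t² - I₁ t - I₂ t`, `I₁` the singular and `I₂` the sublinear integral. The inequalities
`s g'(s) ≤ g(s) ≤ 2 s g'(s)` make the singular integrand comparable to `h g(t v)^(1-γ)`, so with
`C = ∫ h g(v)^(1-γ) > 0` we get `I₁ ≥ C / 2` on `(0, 1]` and `I₁ ≤ C` on `[1, ∞)`, while
`|I₂ t| ≤ ‖b‖_∞ t^(p+1) ∫ |v|^(p+1)` with `p + 1 < 2`. Hence `F < 0` near `0` and `F > 0` for
large `t`. Concavity of `g` on `[0, ∞)` gives `g(t v) ≥ ε g(v)` for `t ≥ ε`, which dominates the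
integrands, so `F` is continuous on `(0, ∞)` and the intermediate value theorem produces `t₀`.
-/

open MeasureTheory Filter Topology Set

lemma integral_pos_of_ae_pos {α : Type*} [MeasurableSpace α] {μ : Measure α} [NeZero μ]
    {f : α → ℝ} (hf : Integrable f μ) (hpos : ∀ᵐ x ∂μ, 0 < f x) : 0 < ∫ x, f x ∂μ := by
  rw [integral_pos_iff_support_of_nonneg_ae (hpos.mono fun _ hx => hx.le) hf]
  refine pos_iff_ne_zero.2 fun h0 => NeZero.ne μ (ae_eq_bot.1 ?_)
  exact eventually_false_iff_eq_bot.1 <|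
    ((measure_eq_zero_iff_ae_notMem.1 h0).and hpos).mono fun _ hx => hx.1 hx.2.ne'

lemma eventually_mul_sq_add_mul_rpow_lt (a K : ℝ) {q c : ℝ} (hq : 0 < q) (hc : 0 < c) :
    ∀ᶠ t in 𝓝[>] 0, a * t ^ 2 + K * t ^ q < c := by
  have hcont : ContinuousAt (fun t : ℝ => a * t ^ 2 + K * t ^ q) 0 :=
    (continuousAt_const.mul (continuousAt_id.pow 2)).add
      (continuousAt_const.mul (Real.continuousAt_rpow_const 0 q (Or.inr hq.le)))
  have h0 : a * (0:ℝ) ^ 2 + K * (0:ℝ) ^ q = 0 := by simp [Real.zero_rpow hq.ne']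
  rw [ContinuousAt, h0] at hcont
  exact nhdsWithin_le_nhds (hcont.eventually (gt_mem_nhds hc))

lemma eventually_add_mul_rpow_lt_mul_sq {a : ℝ} (ha : 0 < a) (C K : ℝ) {q : ℝ} (hq : q < 2) :
    ∀ᶠ t in atTop, C + K * t ^ q < a * t ^ 2 := by
  have hlim : Tendsto (fun t : ℝ => t ^ 2 * (a - K * t ^ (-(2 - q)))) atTop atTop := by
    refine (tendsto_pow_atTop two_ne_zero).atTop_mul_pos ha ?_
    have h := (tendsto_const_nhds (x := a)).sub
      ((tendsto_rpow_neg_atTop (y := 2 - q) (by linarith)).const_mul K)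
    rwa [mul_zero, sub_zero] at h
  filter_upwards [hlim.eventually_gt_atTop C, eventually_gt_atTop 0] with t ht ht0
  have : t ^ 2 * t ^ (-(2 - q)) = t ^ q := by
    rw [← Real.rpow_natCast, ← Real.rpow_add ht0]; norm_num
  calc C + K * t ^ q < t ^ 2 * (a - K * t ^ (-(2 - q))) + K * t ^ q := by gcongr
    _ = a * t ^ 2 := by rw [← this]; ring

section DualChange

-- `g` is the change of variables of the dual approach, with `g' = (1 + 2 g²)^(-1/2)`.
variable {g : ℝ → ℝ} (hg : ∀ t, HasDerivAt g (√(1 + 2 * g t ^ 2))⁻¹ t)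
include hg

lemma deriv_dualChange (t : ℝ) : deriv g t = (√(1 + 2 * g t ^ 2))⁻¹ := (hg t).deriv

lemma deriv_dualChange_pos (t : ℝ) : 0 < deriv g t := by
  rw [deriv_dualChange hg]; positivity

lemma deriv_dualChange_le_one (t : ℝ) : deriv g t ≤ 1 := by
  rw [deriv_dualChange hg]
  exact inv_le_one_of_one_le₀ (Real.one_le_sqrt.2 (by nlinarith [sq_nonneg (g t)]))

lemma differentiable_dualChange : Differentiable ℝ g := fun t => (hg t).differentiableAt

lemma continuous_deriv_dualChange : Continuous (deriv g) := by
  rw [funext (deriv_dualChange hg)]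
  have := (differentiable_dualChange hg).continuous
  exact (by fun_prop : Continuous fun t => √(1 + 2 * g t ^ 2)).inv₀ fun t => by positivity

lemma strictMono_dualChange : StrictMono g :=
  strictMono_of_deriv_pos (deriv_dualChange_pos hg)

lemma hasDerivAt_mul_sqrt_dualChange (s : ℝ) :
    HasDerivAt (fun y => g y * √(1 + 2 * g y ^ 2)) (1 + 2 * g s ^ 2 / (1 + 2 * g s ^ 2)) s := by
  have hq : 0 < 1 + 2 * g s ^ 2 := by positivity
  have hsqrt : HasDerivAt (fun y => √(1 + 2 * g y ^ 2))
      (2 * (2 * g s * (√(1 + 2 * g s ^ 2))⁻¹) / (2 * √(1 + 2 * g s ^ 2))) s := by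
    simpa using ((((hg s).fun_pow 2).const_mul 2).const_add 1).sqrt hq.ne'
  refine ((hg s).fun_mul hsqrt).congr_deriv ?_
  have hr : √(1 + 2 * g s ^ 2) ≠ 0 := by positivity
  have hsq : √(1 + 2 * g s ^ 2) ^ 2 = 1 + 2 * g s ^ 2 := Real.sq_sqrt hq.le
  field_simp
  rw [hsq]

variable (hg0 : g 0 = 0)
include hg0

lemma dualChange_pos {s : ℝ} (hs : 0 < s) : 0 < g s :=
  hg0 ▸ strictMono_dualChange hg hs

lemma dualChange_nonneg {s : ℝ} (hs : 0 ≤ s) : 0 ≤ g s :=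
  hg0 ▸ (strictMono_dualChange hg).monotone hs

lemma dualChange_le_self {s : ℝ} (hs : 0 ≤ s) : g s ≤ s := by
  have := image_sub_le_mul_sub_of_deriv_le (differentiable_dualChange hg)
    (deriv_dualChange_le_one hg) hs
  simpa [hg0] using this

/-- `g / g' = g √(1 + 2 g²)` vanishes at `0` and has derivative `1 + 2 g² / (1 + 2 g²) ∈ [1, 2]`. -/
lemma mul_deriv_le_dualChange_le_two_mul {s : ℝ} (hs : 0 ≤ s) :
    s * deriv g s ≤ g s ∧ g s ≤ 2 * (s * deriv g s) := by
  have hw := hasDerivAt_mul_sqrt_dualChange hg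
  have hwd : Differentiable ℝ fun y => g y * √(1 + 2 * g y ^ 2) :=
    fun y => (hw y).differentiableAt
  have hlow := mul_sub_le_image_sub_of_le_deriv hwd (C := 1) (fun y => by
    rw [(hw y).deriv]; have : 0 ≤ 2 * g y ^ 2 / (1 + 2 * g y ^ 2) := by positivity
    linarith) hs
  have hup := image_sub_le_mul_sub_of_deriv_le hwd (C := 2) (fun y => by
    rw [(hw y).deriv]
    have : 2 * g y ^ 2 / (1 + 2 * g y ^ 2) ≤ 1 := by
      rw [div_le_one (by positivity)]; linarith
    linarith) hs
  simp only [hg0, zero_mul, sub_zero, one_mul] at hlow hup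
  have hr : 0 < √(1 + 2 * g s ^ 2) := by positivity
  rw [deriv_dualChange hg, ← div_eq_mul_inv]
  constructor
  · rwa [div_le_iff₀ hr]
  · rw [mul_div_assoc', le_div_iff₀ hr]; linarith

lemma concaveOn_dualChange : ConcaveOn ℝ (Ici 0) g := by
  refine AntitoneOn.concaveOn_of_deriv (convex_Ici 0)
    (differentiable_dualChange hg).continuous.continuousOn
    (differentiable_dualChange hg).differentiableOn ?_
  rw [interior_Ici]
  intro x hx y hy hxy
  rw [deriv_dualChange hg, deriv_dualChange hg]
  have hgx := dualChange_nonneg hg hg0 (le_of_lt hx)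
  have hgxy := (strictMono_dualChange hg).monotone hxy
  gcongr

lemma mul_dualChange_le {t s : ℝ} (ht0 : 0 ≤ t) (ht1 : t ≤ 1) (hs : 0 ≤ s) :
    t * g s ≤ g (t * s) := by
  have := (concaveOn_dualChange hg hg0).2 (mem_Ici.2 hs) (self_mem_Ici (a := (0:ℝ)))
    ht0 (sub_nonneg.2 ht1) (add_sub_cancel t 1)
  simpa [hg0] using this

end DualChange

section Integrands

variable {g : ℝ → ℝ} (hg : ∀ t, HasDerivAt g (√(1 + 2 * g t ^ 2))⁻¹ t) (hg0 : g 0 = 0)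
include hg hg0

lemma half_mul_rpow_le_mul_rpow_neg_mul_deriv_mul (γ : ℝ) {c s : ℝ} (hc : 0 ≤ c) (hs : 0 < s) :
    c * g s ^ (1 - γ) / 2 ≤ c * g s ^ (-γ) * deriv g s * s := by
  have hgs := dualChange_pos hg hg0 hs
  rw [sub_eq_neg_add, Real.rpow_add_one hgs.ne']
  have := (mul_deriv_le_dualChange_le_two_mul hg hg0 hs.le).2
  have : 0 ≤ c * g s ^ (-γ) := by positivity
  nlinarith

lemma mul_rpow_neg_mul_deriv_mul_le (γ : ℝ) {c s : ℝ} (hc : 0 ≤ c) (hs : 0 < s) :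
    c * g s ^ (-γ) * deriv g s * s ≤ c * g s ^ (1 - γ) := by
  have hgs := dualChange_pos hg hg0 hs
  rw [sub_eq_neg_add, Real.rpow_add_one hgs.ne']
  have := (mul_deriv_le_dualChange_le_two_mul hg hg0 hs.le).1
  have : 0 ≤ c * g s ^ (-γ) := by positivity
  nlinarith

lemma abs_mul_rpow_mul_deriv_mul_le {p : ℝ} (hp : 0 ≤ p) (c : ℝ) {s : ℝ} (hs : 0 ≤ s) :
    |c * g s ^ p * deriv g s * s| ≤ |c| * s ^ (p + 1) := by
  have hgs := dualChange_nonneg hg hg0 hs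
  have hd := deriv_dualChange_pos hg s
  rw [abs_mul, abs_mul, abs_mul, abs_of_nonneg (Real.rpow_nonneg hgs p), abs_of_pos hd,
    abs_of_nonneg hs, Real.rpow_add_one' hs (by linarith), mul_assoc, mul_assoc]
  have hgp : g s ^ p ≤ s ^ p := Real.rpow_le_rpow hgs (dualChange_le_self hg hg0 hs) hp
  have hds : deriv g s * s ≤ s := by nlinarith [deriv_dualChange_le_one hg s]
  exact mul_le_mul_of_nonneg_left (mul_le_mul hgp hds (by positivity) (by positivity))
    (abs_nonneg c)

lemma rpow_one_sub_le_of_le {γ : ℝ} (hγ : 1 ≤ γ) {s s' : ℝ} (hs : 0 < s) (hss' : s ≤ s') :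
    g s' ^ (1 - γ) ≤ g s ^ (1 - γ) :=
  Real.rpow_le_rpow_of_nonpos (dualChange_pos hg hg0 hs)
    ((strictMono_dualChange hg).monotone hss') (by linarith)

lemma rpow_one_sub_mul_le {γ : ℝ} (hγ : 1 ≤ γ) {ε t s : ℝ} (hε : 0 < ε) (hε1 : ε ≤ 1)
    (hεt : ε ≤ t) (hs : 0 < s) : g (t * s) ^ (1 - γ) ≤ ε ^ (1 - γ) * g s ^ (1 - γ) := by
  rw [← Real.mul_rpow hε.le (dualChange_nonneg hg hg0 hs.le)]
  calc g (t * s) ^ (1 - γ) ≤ g (ε * s) ^ (1 - γ) :=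
        rpow_one_sub_le_of_le hg hg0 hγ (by positivity) (by gcongr)
    _ ≤ (ε * g s) ^ (1 - γ) :=
        Real.rpow_le_rpow_of_nonpos (mul_pos hε (dualChange_pos hg hg0 hs))
          (mul_dualChange_le hg hg0 hε.le hε1 hs.le) (by linarith)

end Integrands

section NehariIntegral

variable {α : Type*} [MeasurableSpace α] {μ : Measure α}

-- With `(r, c) = (-γ, h)` and `(r, c) = (p, b)` these are the two integrals defining `𝒩₂`,
-- evaluated at `t v`.
noncomputable def nehariIntegral (μ : Measure α) (g : ℝ → ℝ) (r : ℝ) (c v : α → ℝ) (t : ℝ) :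
    ℝ :=
  ∫ x, c x * g (t * v x) ^ r * deriv g (t * v x) * (t * v x) ∂μ

variable {g : ℝ → ℝ} {c v : α → ℝ}

lemma aestronglyMeasurable_nehariIntegrand (hg : Measurable g) (hc : AEStronglyMeasurable c μ)
    (hv : AEMeasurable v μ) (r t : ℝ) :
    AEStronglyMeasurable (fun x => c x * g (t * v x) ^ r * deriv g (t * v x) * (t * v x)) μ := by
  have htv := hv.const_mul t
  exact (((hc.aemeasurable.mul ((hg.comp_aemeasurable htv).pow_const r)).mul
    ((measurable_deriv g).comp_aemeasurable htv)).mul htv).aestronglyMeasurable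

variable (hg : ∀ t, HasDerivAt g (√(1 + 2 * g t ^ 2))⁻¹ t) (hg0 : g 0 = 0)
include hg hg0

lemma continuousOn_nehariIntegral {r : ℝ} {s : Set ℝ} (hs : s ⊆ Ioi 0)
    (hc : AEStronglyMeasurable c μ) (hv : AEMeasurable v μ) (hv_pos : ∀ᵐ x ∂μ, 0 < v x)
    {bound : α → ℝ} (hbound : Integrable bound μ)
    (hle : ∀ t ∈ s, ∀ᵐ x ∂μ, ‖c x * g (t * v x) ^ r * deriv g (t * v x) * (t * v x)‖ ≤ bound x) :
    ContinuousOn (nehariIntegral μ g r c v) s := by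
  have hgc := (differentiable_dualChange hg).continuous
  refine continuousOn_of_dominated
    (fun t _ => aestronglyMeasurable_nehariIntegrand hgc.measurable hc hv r t) hle hbound ?_
  filter_upwards [hv_pos] with x hx t ht
  have hgt : g (t * v x) ≠ 0 := (dualChange_pos hg hg0 (mul_pos (hs ht) hx)).ne'
  have htv : Continuous fun t : ℝ => t * v x := by fun_prop
  exact ((continuousAt_const.mul ((hgc.comp htv).continuousAt.rpow_const (Or.inl hgt))).mul
    ((continuous_deriv_dualChange hg).comp htv).continuousAt).mul
    htv.continuousAt |>.continuousWithinAt

end NehariIntegral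

section Estimates

variable {α : Type*} [MeasurableSpace α] {μ : Measure α} {g : ℝ → ℝ} {v : α → ℝ}
  (hg : ∀ t, HasDerivAt g (√(1 + 2 * g t ^ 2))⁻¹ t) (hg0 : g 0 = 0)

section Singular

variable {γ : ℝ} (hγ : 1 ≤ γ) {h : α → ℝ} (hh_nonneg : ∀ᵐ x ∂μ, 0 ≤ h x)
  (hv_pos : ∀ᵐ x ∂μ, 0 < v x)
include hg hg0 hγ hh_nonneg hv_pos

lemma norm_singularIntegrand_le {ε t : ℝ} (hε : 0 < ε) (hε1 : ε ≤ 1) (hεt : ε ≤ t) :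
    ∀ᵐ x ∂μ, ‖h x * g (t * v x) ^ (-γ) * deriv g (t * v x) * (t * v x)‖ ≤
      ε ^ (1 - γ) * (h x * g (v x) ^ (1 - γ)) := by
  filter_upwards [hh_nonneg, hv_pos] with x hx hvx
  have hs : 0 < t * v x := mul_pos (hε.trans_le hεt) hvx
  have hlow := half_mul_rpow_le_mul_rpow_neg_mul_deriv_mul hg hg0 γ hx hs
  have hgs : 0 ≤ h x * g (t * v x) ^ (1 - γ) / 2 :=
    div_nonneg (mul_nonneg hx (Real.rpow_nonneg (dualChange_nonneg hg hg0 hs.le) _)) two_pos.le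
  rw [Real.norm_eq_abs, abs_of_nonneg (hgs.trans hlow)]
  calc h x * g (t * v x) ^ (-γ) * deriv g (t * v x) * (t * v x)
      ≤ h x * g (t * v x) ^ (1 - γ) := mul_rpow_neg_mul_deriv_mul_le hg hg0 γ hx hs
    _ ≤ h x * (ε ^ (1 - γ) * g (v x) ^ (1 - γ)) := by
      gcongr h x * ?_
      exact rpow_one_sub_mul_le hg hg0 hγ hε hε1 hεt hvx
    _ = ε ^ (1 - γ) * (h x * g (v x) ^ (1 - γ)) := by ring

variable (hh : AEStronglyMeasurable h μ) (hv : AEMeasurable v μ)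
  (hv_intg : Integrable (fun x => h x * g (v x) ^ (1 - γ)) μ)
include hh hv hv_intg

lemma integrable_singularIntegrand {ε t : ℝ} (hε : 0 < ε) (hε1 : ε ≤ 1) (hεt : ε ≤ t) :
    Integrable (fun x => h x * g (t * v x) ^ (-γ) * deriv g (t * v x) * (t * v x)) μ :=
  (hv_intg.const_mul _).mono'
    (aestronglyMeasurable_nehariIntegrand (differentiable_dualChange hg).continuous.measurable
      hh hv _ t)
    (norm_singularIntegrand_le hg hg0 hγ hh_nonneg hv_pos hε hε1 hεt)

lemma half_integral_le_nehariIntegral {t : ℝ} (ht : 0 < t) (ht1 : t ≤ 1) :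
    (∫ x, h x * g (v x) ^ (1 - γ) ∂μ) / 2 ≤ nehariIntegral μ g (-γ) h v t := by
  rw [← integral_div]
  refine integral_mono_ae (hv_intg.div_const 2)
    (integrable_singularIntegrand hg hg0 hγ hh_nonneg hv_pos hh hv hv_intg ht ht1 le_rfl) ?_
  filter_upwards [hh_nonneg, hv_pos] with x hx hvx
  calc h x * g (v x) ^ (1 - γ) / 2 ≤ h x * g (t * v x) ^ (1 - γ) / 2 := by
        gcongr h x * ?_ / 2
        exact rpow_one_sub_le_of_le hg hg0 hγ (mul_pos ht hvx) (mul_le_of_le_one_left hvx.le ht1)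
    _ ≤ _ := half_mul_rpow_le_mul_rpow_neg_mul_deriv_mul hg hg0 γ hx (mul_pos ht hvx)

lemma nehariIntegral_le_integral {t : ℝ} (ht : 1 ≤ t) :
    nehariIntegral μ g (-γ) h v t ≤ ∫ x, h x * g (v x) ^ (1 - γ) ∂μ := by
  refine integral_mono_ae
    (integrable_singularIntegrand hg hg0 hγ hh_nonneg hv_pos hh hv hv_intg one_pos le_rfl ht)
    hv_intg ?_
  filter_upwards [hh_nonneg, hv_pos] with x hx hvx
  have hs : 0 < t * v x := mul_pos (one_pos.trans_le ht) hvx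
  calc _ ≤ h x * g (t * v x) ^ (1 - γ) := mul_rpow_neg_mul_deriv_mul_le hg hg0 γ hx hs
    _ ≤ h x * g (v x) ^ (1 - γ) := by
      gcongr h x * ?_
      exact rpow_one_sub_le_of_le hg hg0 hγ hvx (le_mul_of_one_le_left hvx.le ht)

lemma continuousOn_nehariIntegral_singular {ε : ℝ} (hε : 0 < ε) (hε1 : ε ≤ 1) :
    ContinuousOn (nehariIntegral μ g (-γ) h v) (Ici ε) :=
  continuousOn_nehariIntegral hg hg0 (fun _ ht => hε.trans_le ht) hh hv hv_pos
    (hv_intg.const_mul _) fun _ ht => norm_singularIntegrand_le hg hg0 hγ hh_nonneg hv_pos hε hε1 ht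

end Singular

section Sublinear

variable {p : ℝ} (hp : 0 ≤ p) {b : α → ℝ} {M : ℝ} (hbM : ∀ᵐ x ∂μ, ‖b x‖ ≤ M)
  (hv_intp : Integrable (fun x => |v x| ^ (p + 1)) μ)
include hg hg0 hp hbM

lemma norm_sublinearIntegrand_le (hv_nonneg : ∀ᵐ x ∂μ, 0 ≤ v x) {t : ℝ} (ht : 0 ≤ t) :
    ∀ᵐ x ∂μ, ‖b x * g (t * v x) ^ p * deriv g (t * v x) * (t * v x)‖ ≤
      t ^ (p + 1) * (M * |v x| ^ (p + 1)) := by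
  filter_upwards [hbM, hv_nonneg] with x hbx hvx
  rw [Real.norm_eq_abs]
  refine (abs_mul_rpow_mul_deriv_mul_le hg hg0 hp (b x) (mul_nonneg ht hvx)).trans ?_
  rw [Real.norm_eq_abs] at hbx
  rw [Real.mul_rpow ht hvx, abs_of_nonneg hvx]
  have : 0 ≤ t ^ (p + 1) * v x ^ (p + 1) := by positivity
  nlinarith

include hv_intp in
lemma abs_nehariIntegral_le (hv_nonneg : ∀ᵐ x ∂μ, 0 ≤ v x) {t : ℝ} (ht : 0 ≤ t) :
    |nehariIntegral μ g p b v t| ≤ t ^ (p + 1) * (M * ∫ x, |v x| ^ (p + 1) ∂μ) := by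
  rw [← integral_const_mul, ← integral_const_mul, ← Real.norm_eq_abs]
  exact norm_integral_le_of_norm_le ((hv_intp.const_mul M).const_mul _)
    (norm_sublinearIntegrand_le hg hg0 hp hbM hv_nonneg ht)

include hv_intp in
lemma continuousOn_nehariIntegral_sublinear (hb : AEStronglyMeasurable b μ) (hv : AEMeasurable v μ)
    (hv_pos : ∀ᵐ x ∂μ, 0 < v x) (T : ℝ) : ContinuousOn (nehariIntegral μ g p b v) (Ioc 0 T) := by
  refine continuousOn_nehariIntegral hg hg0 (fun _ ht => ht.1) hb hv hv_pos
    ((hv_intp.const_mul M).const_mul (T ^ (p + 1))) fun t ht => ?_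
  filter_upwards [norm_sublinearIntegrand_le hg hg0 hp hbM (hv_pos.mono fun _ => le_of_lt) ht.1.le,
    hbM] with x hx hbx
  have hM : 0 ≤ M := (norm_nonneg _).trans hbx
  exact hx.trans (mul_le_mul_of_nonneg_right (Real.rpow_le_rpow ht.1.le ht.2 (by linarith))
    (by positivity))

end Sublinear

end Estimates

theorem exists_pos_mul_sq_eq_nehariIntegral_add {α : Type*} [MeasurableSpace α] {μ : Measure α}
    [NeZero μ] {g : ℝ → ℝ} (hg : ∀ t, HasDerivAt g (√(1 + 2 * g t ^ 2))⁻¹ t) (hg0 : g 0 = 0)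
    {γ p a M : ℝ} (hγ : 1 ≤ γ) (hp0 : 0 ≤ p) (hp1 : p < 1) (ha : 0 < a)
    {h b v : α → ℝ} (hh : AEStronglyMeasurable h μ) (hh_pos : ∀ᵐ x ∂μ, 0 < h x)
    (hb : AEStronglyMeasurable b μ) (hbM : ∀ᵐ x ∂μ, ‖b x‖ ≤ M)
    (hv : AEMeasurable v μ) (hv_pos : ∀ᵐ x ∂μ, 0 < v x)
    (hv_intp : Integrable (fun x => |v x| ^ (p + 1)) μ)
    (hv_intg : Integrable (fun x => h x * g (v x) ^ (1 - γ)) μ) :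
    ∃ t₀, 0 < t₀ ∧
      a * t₀ ^ 2 = nehariIntegral μ g (-γ) h v t₀ + nehariIntegral μ g p b v t₀ := by
  have hh_nonneg : ∀ᵐ x ∂μ, 0 ≤ h x := hh_pos.mono fun _ => le_of_lt
  have hv_nonneg : ∀ᵐ x ∂μ, 0 ≤ v x := hv_pos.mono fun _ => le_of_lt
  set C₁ := ∫ x, h x * g (v x) ^ (1 - γ) ∂μ
  set C₂ := M * ∫ x, |v x| ^ (p + 1) ∂μ
  have hC₁ : 0 < C₁ := integral_pos_of_ae_pos hv_intg <| by
    filter_upwards [hh_pos, hv_pos] with x hx hvx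
    exact mul_pos hx (Real.rpow_pos_of_pos (dualChange_pos hg hg0 hvx) _)
  set F := fun t => a * t ^ 2 - nehariIntegral μ g (-γ) h v t - nehariIntegral μ g p b v t
  have hI₂ (t : ℝ) (ht : 0 ≤ t) : |nehariIntegral μ g p b v t| ≤ t ^ (p + 1) * C₂ :=
    abs_nehariIntegral_le hg hg0 hp0 hbM hv_intp hv_nonneg ht
  obtain ⟨ε, hεsmall, hε, hε1⟩ :=
    ((eventually_mul_sq_add_mul_rpow_lt a C₂ (q := p + 1) (by linarith) (half_pos hC₁)).and
      (Ioc_mem_nhdsGT one_pos)).exists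
  have hFε : F ε < 0 := by
    simp only [F]
    linarith [half_integral_le_nehariIntegral hg hg0 hγ hh_nonneg hv_pos hh hv hv_intg hε hε1,
      (abs_le.1 (hI₂ ε hε.le)).1]
  obtain ⟨T, hTlarge, hT1⟩ :=
    ((eventually_add_mul_rpow_lt_mul_sq ha C₁ C₂ (q := p + 1) (by linarith)).and
      (eventually_ge_atTop 1)).exists
  have hFT : 0 < F T := by
    simp only [F]
    linarith [nehariIntegral_le_integral hg hg0 hγ hh_nonneg hv_pos hh hv hv_intg hT1,
      (abs_le.1 (hI₂ T (by linarith))).2]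
  have hF : ContinuousOn F (Icc ε T) :=
    ((continuous_const.mul (continuous_pow 2)).continuousOn.sub
      ((continuousOn_nehariIntegral_singular hg hg0 hγ hh_nonneg hv_pos hh hv hv_intg hε hε1).mono
        Icc_subset_Ici_self)).sub
      ((continuousOn_nehariIntegral_sublinear hg hg0 hp0 hbM hv_intp hb hv hv_pos T).mono
        fun t ht => ⟨hε.trans_le ht.1, ht.2⟩)
  obtain ⟨t₀, ht₀, hFt₀⟩ := intermediate_value_Icc (hε1.trans hT1) hF ⟨hFε.le, hFT.le⟩
  exact ⟨t₀, hε.trans_le ht₀.1, by simp only [F] at hFt₀; linarith⟩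

theorem stmt_17_general (N : ℕ)
    (Ω : Set (EuclideanSpace ℝ (Fin N)))
    (hΩpos : 0 < volume Ω)
    (γ : ℝ) (hγ : 1 < γ)
    (g : ℝ → ℝ) (hg0 : g 0 = 0)
    (hg : ∀ t : ℝ, HasDerivAt g ((1 + 2 * g t ^ 2) ^ (-(1 / 2) : ℝ)) t)
    (h : EuclideanSpace ℝ (Fin N) → ℝ)
    (hh_int : IntegrableOn h Ω)
    (hh_pos : ∀ᵐ x ∂(volume.restrict Ω), 0 < h x)
    (p : ℝ) (hp0 : 0 < p) (hp1 : p < 1)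
    (b : EuclideanSpace ℝ (Fin N) → ℝ)
    (hb : MemLp b ⊤ (volume.restrict Ω))
    (a : ℝ) (ha : 0 < a)
    (v : EuclideanSpace ℝ (Fin N) → ℝ)
    (hv_meas : AEMeasurable v (volume.restrict Ω))
    (hv_pos : ∀ᵐ x ∂(volume.restrict Ω), 0 < v x)
    (hv_intp : IntegrableOn (fun x => |v x| ^ (p + 1)) Ω)
    (hv_intg : IntegrableOn (fun x => h x * g (v x) ^ (1 - γ)) Ω) :
    ∃ t₀ : ℝ, 0 < t₀ ∧
      a * t₀ ^ 2 =
        (∫ x in Ω, h x * g (t₀ * v x) ^ (-γ) * deriv g (t₀ * v x) * (t₀ * v x))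
          + ∫ x in Ω, b x * g (t₀ * v x) ^ p * deriv g (t₀ * v x) * (t₀ * v x) := by
  have : NeZero (volume.restrict Ω) := ⟨Measure.restrict_eq_zero.not.2 hΩpos.ne'⟩
  have hg' (t : ℝ) : HasDerivAt g (√(1 + 2 * g t ^ 2))⁻¹ t := by
    rw [Real.sqrt_eq_rpow, ← Real.rpow_neg (by positivity)]
    exact hg t
  exact exists_pos_mul_sq_eq_nehariIntegral_add hg' hg0 hγ.le hp0.le hp1 ha
    hh_int.aestronglyMeasurable hh_pos hb.aestronglyMeasurable (ae_le_lpNorm_exponent_top hb)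
    hv_meas hv_pos hv_intp hv_intg

/-- projection on the Nehari-type constraint set `𝒩₂`: there is
`t₀ > 0` with `a t₀² = ∫_Ω h g(t₀v)^(−γ) g'(t₀v) t₀ v + ∫_Ω b g(t₀v)^p g'(t₀v) t₀ v`. -/
theorem stmt_17 (N : ℕ) (hN : 3 ≤ N)
    (Ω : Set (EuclideanSpace ℝ (Fin N))) (hΩo : IsOpen Ω)
    (hΩb : Bornology.IsBounded Ω) (hΩpos : 0 < volume Ω)
    (γ : ℝ) (hγ : 1 < γ)
    (g : ℝ → ℝ) (hg0 : g 0 = 0)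
    (hg : ∀ t : ℝ, HasDerivAt g ((1 + 2 * g t ^ 2) ^ (-(1 / 2) : ℝ)) t)
    (h : EuclideanSpace ℝ (Fin N) → ℝ)
    (hh_int : IntegrableOn h Ω)
    (hh_pos : ∀ᵐ x ∂(volume.restrict Ω), 0 < h x)
    (p : ℝ) (hp0 : 0 < p) (hp1 : p < 1)
    (b : EuclideanSpace ℝ (Fin N) → ℝ)
    (hb : MemLp b ⊤ (volume.restrict Ω))
    (a : ℝ) (ha : 0 < a)
    (v : EuclideanSpace ℝ (Fin N) → ℝ)
    (hv_meas : AEMeasurable v (volume.restrict Ω))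
    (hv_pos : ∀ᵐ x ∂(volume.restrict Ω), 0 < v x)
    (hv_intp : IntegrableOn (fun x => |v x| ^ (p + 1)) Ω)
    (hv_intg : IntegrableOn (fun x => h x * g (v x) ^ (1 - γ)) Ω) :
    ∃ t₀ : ℝ, 0 < t₀ ∧
      a * t₀ ^ 2 =
        (∫ x in Ω, h x * g (t₀ * v x) ^ (-γ) * deriv g (t₀ * v x) * (t₀ * v x))
          + ∫ x in Ω, b x * g (t₀ * v x) ^ p * deriv g (t₀ * v x) * (t₀ * v x) :=
  stmt_17_general N Ω hΩpos γ hγ g hg0 hg h hh_int hh_pos p hp0 hp1 b hb a ha v hv_meas hv_pos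
    hv_intp hv_intg
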